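/- (Theorem 1, part i) Under Assumptions 1 and 2, let the GTT stepsize satisfy 0 < γ < 2/L, so that ρ := max{|1−γm|, |1−γL|} < 1. Then for any sampling period h > 0, the GTT iterates satisfy, for every k ≥ 0: ‖x_k − x*(t_k)‖ ≤ ρ^{τk}·‖x₀ − x*(t₀)‖ + ρ^τ·[ h·(2C₀/m) + (h²/2)·(C₀²C₁/m³ + 2C₀C₂/m² + C₃/m) ]·(1 − ρ^{τk})/(1 − ρ^τ). -/

import Mathlib

/-!
Each correction step `y ↦ y - γ ∇ₓf(y;t)` has derivative `I - γ ∇ₓₓf`, a symmetric operator with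
spectrum in `[1 - γL, 1 - γm]`, so it is a `ρ`-contraction with fixed point `x*(t)`, and `τ` of
them contract by `ρ^τ`. The prediction step moves the iterate by at most `hC₀/m`, and strong
monotonicity of the gradient makes `x*` `(C₀/m)`-Lipschitz in time, so the prediction error is at
most the tracking error plus `2hC₀/m`. The tracking errors thus satisfy
`e_{k+1} ≤ ρ^τ (e_k + 2hC₀/m)`, and unrolling this recursion gives the bound; its second-order term
in `h` is slack.
-/

noncomputable section

/-- The setting of a time-varying, smooth, strongly convex optimization problem
`min_{x ∈ ℝⁿ} f(x;t)`, bundling the objective `f`, its derivatives, the Hessian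
inverse, the optimal trajectory `x*(t)`, and Assumptions 1 and 2 of the paper. -/
structure TVOpt (n : ℕ) where
  /-- the objective `f(x;t)` -/
  f : EuclideanSpace ℝ (Fin n) → ℝ → ℝ
  /-- the gradient `∇ₓ f(x;t)` -/
  grad : EuclideanSpace ℝ (Fin n) → ℝ → EuclideanSpace ℝ (Fin n)
  /-- the Hessian `∇ₓₓ f(x;t)` -/
  hess : EuclideanSpace ℝ (Fin n) → ℝ →
    EuclideanSpace ℝ (Fin n) →L[ℝ] EuclideanSpace ℝ (Fin n)
  /-- the Hessian inverse `[∇ₓₓ f(x;t)]⁻¹` -/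
  hessInv : EuclideanSpace ℝ (Fin n) → ℝ →
    EuclideanSpace ℝ (Fin n) →L[ℝ] EuclideanSpace ℝ (Fin n)
  /-- the mixed partial derivative `∇_{tx} f(x;t)` -/
  dtgrad : EuclideanSpace ℝ (Fin n) → ℝ → EuclideanSpace ℝ (Fin n)
  /-- the third derivative tensor `∇ₓₓₓ f(x;t)` -/
  d3 : EuclideanSpace ℝ (Fin n) → ℝ →
    EuclideanSpace ℝ (Fin n) →L[ℝ] EuclideanSpace ℝ (Fin n) →L[ℝ] EuclideanSpace ℝ (Fin n)
  /-- the time derivative of the Hessian `∇_{xtx} f(x;t)` -/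
  dthess : EuclideanSpace ℝ (Fin n) → ℝ →
    EuclideanSpace ℝ (Fin n) →L[ℝ] EuclideanSpace ℝ (Fin n)
  /-- the second time derivative of the gradient `∇_{ttx} f(x;t)` -/
  dttgrad : EuclideanSpace ℝ (Fin n) → ℝ → EuclideanSpace ℝ (Fin n)
  /-- the optimal trajectory `x*(t)` -/
  xstar : ℝ → EuclideanSpace ℝ (Fin n)
  /-- strong convexity constant -/
  m : ℝ
  /-- Hessian norm bound (gradient Lipschitz constant) -/
  L : ℝ
  C0 : ℝ
  C1 : ℝ
  C2 : ℝ
  C3 : ℝ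
  m_pos : 0 < m
  grad_spec : ∀ (x : EuclideanSpace ℝ (Fin n)) (t : ℝ), HasGradientAt (fun y => f y t) (grad x t) x
  hess_spec : ∀ (x : EuclideanSpace ℝ (Fin n)) (t : ℝ), HasFDerivAt (fun y => grad y t) (hess x t) x
  dtgrad_spec : ∀ (x : EuclideanSpace ℝ (Fin n)) (t : ℝ), HasDerivAt (fun s => grad x s) (dtgrad x t) t
  d3_spec : ∀ (x : EuclideanSpace ℝ (Fin n)) (t : ℝ), HasFDerivAt (fun y => hess y t) (d3 x t) x
  dthess_spec : ∀ (x : EuclideanSpace ℝ (Fin n)) (t : ℝ), HasDerivAt (fun s => hess x s) (dthess x t) t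
  dttgrad_spec : ∀ (x : EuclideanSpace ℝ (Fin n)) (t : ℝ), HasDerivAt (fun s => dtgrad x s) (dttgrad x t) t
  /-- Assumption 1: `∇ₓₓ f(x;t) ⪰ m·I` uniformly in `x` and `t`. -/
  strong_convex : ∀ (x : EuclideanSpace ℝ (Fin n)) (t : ℝ) (v : EuclideanSpace ℝ (Fin n)),
    m * ‖v‖ ^ 2 ≤ @inner ℝ _ _ v (hess x t v)
  hessInv_left : ∀ (x : EuclideanSpace ℝ (Fin n)) (t : ℝ), ContinuousLinearMap.comp (hessInv x t) (hess x t) =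
    ContinuousLinearMap.id ℝ (EuclideanSpace ℝ (Fin n))
  hessInv_right : ∀ (x : EuclideanSpace ℝ (Fin n)) (t : ℝ), ContinuousLinearMap.comp (hess x t) (hessInv x t) =
    ContinuousLinearMap.id ℝ (EuclideanSpace ℝ (Fin n))
  /-- Assumption 2: bounded derivatives, uniformly in `x` and `t`. -/
  hess_bound : ∀ (x : EuclideanSpace ℝ (Fin n)) (t : ℝ), ‖hess x t‖ ≤ L
  dtgrad_bound : ∀ (x : EuclideanSpace ℝ (Fin n)) (t : ℝ), ‖dtgrad x t‖ ≤ C0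
  d3_bound : ∀ (x : EuclideanSpace ℝ (Fin n)) (t : ℝ), ‖d3 x t‖ ≤ C1
  dthess_bound : ∀ (x : EuclideanSpace ℝ (Fin n)) (t : ℝ), ‖dthess x t‖ ≤ C2
  dttgrad_bound : ∀ (x : EuclideanSpace ℝ (Fin n)) (t : ℝ), ‖dttgrad x t‖ ≤ C3
  /-- `x*(t)` minimizes `f(·;t)` -/
  xstar_min : ∀ t : ℝ, IsMinOn (fun x => f x t) Set.univ (xstar t)
  /-- equivalently, `∇ₓ f(x*(t);t) = 0` -/
  xstar_grad : ∀ t : ℝ, grad (xstar t) t = 0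

local notation "⟪" x ", " y "⟫" => @inner ℝ _ _ x y

theorem le_geom_of_le_mul_add {e : ℕ → ℝ} {q b : ℝ} (hq0 : 0 ≤ q) (hq1 : q ≠ 1)
    (he : ∀ k, e (k + 1) ≤ q * (e k + b)) (k : ℕ) :
    e k ≤ q ^ k * e 0 + q * b * ((1 - q ^ k) / (1 - q)) := by
  have hq : 1 - q ≠ 0 := sub_ne_zero.mpr hq1.symm
  induction k with
  | zero => simp
  | succ k ih =>
    calc e (k + 1) ≤ q * (q ^ k * e 0 + q * b * ((1 - q ^ k) / (1 - q)) + b) :=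
          (he k).trans (mul_le_mul_of_nonneg_left (by linarith) hq0)
      _ = q ^ (k + 1) * e 0 + q * b * ((1 - q ^ (k + 1)) / (1 - q)) := by
          field_simp; ring

theorem max_abs_one_sub_mul_lt_one {m L γ : ℝ} (hm : 0 < m) (hmL : m ≤ L) (hγ : 0 < γ)
    (hγL : γ < 2 / L) : max |1 - γ * m| |1 - γ * L| < 1 := by
  have hγL' : γ * L < 2 := (lt_div_iff₀ (hm.trans_le hmL)).mp hγL
  have : γ * m ≤ γ * L := by gcongr
  refine max_lt (abs_lt.mpr ⟨?_, ?_⟩) (abs_lt.mpr ⟨?_, ?_⟩) <;> nlinarith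

section InnerProductSpace

variable {E : Type*} [NormedAddCommGroup E] [InnerProductSpace ℝ E]

theorem mul_norm_le_norm_of_mul_sq_le_inner {m : ℝ} {v w : E} (h : m * ‖v‖ ^ 2 ≤ ⟪w, v⟫) :
    m * ‖v‖ ≤ ‖w‖ := by
  rcases (norm_nonneg v).eq_or_lt with hv | hv
  · rw [← hv, mul_zero]; exact norm_nonneg w
  · refine le_of_mul_le_mul_right ?_ hv
    calc m * ‖v‖ * ‖v‖ = m * ‖v‖ ^ 2 := by ring
      _ ≤ ‖w‖ * ‖v‖ := h.trans (real_inner_le_norm w v)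

theorem LinearMap.IsSymmetric.opNorm_le_of_abs_inner_le {T : E →L[ℝ] E}
    (hT : (T : E →ₗ[ℝ] E).IsSymmetric) {c : ℝ} (hc : 0 ≤ c)
    (h : ∀ x, |⟪T x, x⟫| ≤ c * ‖x‖ ^ 2) : ‖T‖ ≤ c := by
  rw [T.norm_eq_iSup_rayleighQuotient hT]
  refine ciSup_le fun x => ?_
  rw [ContinuousLinearMap.rayleighQuotient, ContinuousLinearMap.reApplyInnerSelf_apply, abs_div,
    abs_sq]
  rcases eq_or_ne x 0 with rfl | hx
  · simpa using hc
  · exact div_le_of_le_mul₀ (sq_nonneg _) hc (h x)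

theorem LinearMap.IsSymmetric.norm_id_sub_smul_le {A : E →L[ℝ] E}
    (hA : (A : E →ₗ[ℝ] E).IsSymmetric) {m L : ℝ} (hm : ∀ v, m * ‖v‖ ^ 2 ≤ ⟪v, A v⟫)
    (hL : ∀ v, ⟪v, A v⟫ ≤ L * ‖v‖ ^ 2) (γ : ℝ) :
    ‖ContinuousLinearMap.id ℝ E - γ • A‖ ≤ max |1 - γ * m| |1 - γ * L| := by
  refine opNorm_le_of_abs_inner_le (fun v w => ?_) ((abs_nonneg _).trans (le_max_left _ _))
    fun v => ?_
  · simp only [ContinuousLinearMap.coe_coe, _root_.sub_apply, ContinuousLinearMap.id_apply,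
      _root_.smul_apply, inner_sub_left, inner_sub_right, real_inner_smul_left,
      real_inner_smul_right]
    rw [show ⟪A v, w⟫ = ⟪v, A w⟫ from hA v w]
  · have hquad : ⟪(ContinuousLinearMap.id ℝ E - γ • A) v, v⟫ = ‖v‖ ^ 2 - γ * ⟪v, A v⟫ := by
      rw [_root_.sub_apply, ContinuousLinearMap.id_apply, _root_.smul_apply, inner_sub_left,
        real_inner_smul_left, real_inner_self_eq_norm_sq, real_inner_comm]
    rw [hquad, max_mul_of_nonneg _ _ (sq_nonneg ‖v‖), ← abs_of_nonneg (sq_nonneg ‖v‖),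
      ← abs_mul, ← abs_mul, abs_of_nonneg (sq_nonneg ‖v‖)]
    have := hm v
    have := hL v
    rcases le_total 0 γ with hγ | hγ
    · exact abs_le_max_abs_abs (by nlinarith) (by nlinarith) |>.trans_eq (max_comm _ _)
    · exact abs_le_max_abs_abs (by nlinarith) (by nlinarith)

theorem mul_norm_sub_sq_le_inner_sub {g : E → E} {g' : E → E →L[ℝ] E} {m : ℝ}
    (hg : ∀ x, HasFDerivAt g (g' x) x) (hm : ∀ x v, m * ‖v‖ ^ 2 ≤ ⟪v, g' x v⟫) (y z : E) :
    m * ‖y - z‖ ^ 2 ≤ ⟪g y - g z, y - z⟫ := by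
  set v := y - z
  let φ : ℝ → ℝ := fun θ => ⟪g (z + θ • v), v⟫ - θ * (m * ‖v‖ ^ 2)
  have hφ : ∀ θ, HasDerivAt φ (⟪g' (z + θ • v) v, v⟫ - m * ‖v‖ ^ 2) θ := fun θ => by
    have hline : HasDerivAt (fun θ : ℝ => z + θ • v) v θ := by
      simpa using ((hasDerivAt_id θ).smul_const v).const_add z
    have hinner : HasDerivAt (fun θ : ℝ => ⟪g (z + θ • v), v⟫) ⟪g' (z + θ • v) v, v⟫ θ := by
      simpa using ((hg _).comp_hasDerivAt θ hline).inner ℝ (hasDerivAt_const θ v)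
    exact hinner.sub (hasDerivAt_mul_const _)
  have hmono : Monotone φ := monotone_of_deriv_nonneg (fun θ => (hφ θ).differentiableAt)
    fun θ => by rw [(hφ θ).deriv, real_inner_comm]; linarith [hm (z + θ • v) v]
  have h01 := hmono zero_le_one
  simp only [φ, zero_smul, add_zero, zero_mul, sub_zero, one_smul, one_mul, v,
    add_sub_cancel] at h01
  rw [inner_sub_left]
  linarith

end InnerProductSpace

namespace TVOpt

variable {n : ℕ} (P : TVOpt n)

local notation "ℝⁿ" => EuclideanSpace ℝ (Fin n)

theorem isSymmetric_hess (x : ℝⁿ) (t : ℝ) : (P.hess x t : ℝⁿ →ₗ[ℝ] ℝⁿ).IsSymmetric := by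
  let D := (InnerProductSpace.toDual ℝ ℝⁿ).toContinuousLinearEquiv.toContinuousLinearMap
  have hf : ∀ y, HasFDerivAt (fun z => P.f z t) (D (P.grad y t)) y :=
    fun y => (P.grad_spec y t).hasFDerivAt
  have hD : HasFDerivAt (fun y => D (P.grad y t)) (D.comp (P.hess x t)) x :=
    D.hasFDerivAt.comp x (P.hess_spec x t)
  intro v w
  simpa [D, real_inner_comm] using second_derivative_symmetric hf hD v w

theorem inner_hess_self_le (x : ℝⁿ) (t : ℝ) (v : ℝⁿ) : ⟪v, P.hess x t v⟫ ≤ P.L * ‖v‖ ^ 2 :=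
  calc ⟪v, P.hess x t v⟫ ≤ ‖v‖ * (‖P.hess x t‖ * ‖v‖) :=
        (real_inner_le_norm _ _).trans
          (mul_le_mul_of_nonneg_left ((P.hess x t).le_opNorm v) (norm_nonneg v))
    _ ≤ P.L * ‖v‖ ^ 2 := by nlinarith [P.hess_bound x t, sq_nonneg ‖v‖]

theorem mul_norm_le_norm_hess_apply (x : ℝⁿ) (t : ℝ) (v : ℝⁿ) :
    P.m * ‖v‖ ≤ ‖P.hess x t v‖ :=
  mul_norm_le_norm_of_mul_sq_le_inner ((P.strong_convex x t v).trans_eq (real_inner_comm _ _))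

theorem m_le_L (hn : 0 < n) : P.m ≤ P.L := by
  let v : ℝⁿ := EuclideanSpace.single ⟨0, hn⟩ 1
  have hv : ‖v‖ = 1 := by simp [v]
  simpa [hv] using (P.mul_norm_le_norm_hess_apply 0 0 v).trans <| ((P.hess 0 0).le_opNorm v).trans
    (mul_le_mul_of_nonneg_right (P.hess_bound 0 0) (norm_nonneg v))

theorem norm_hessInv_apply_le (x : ℝⁿ) (t : ℝ) (w : ℝⁿ) : ‖P.hessInv x t w‖ ≤ ‖w‖ / P.m := by
  have hw : P.hess x t (P.hessInv x t w) = w := by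
    simpa using DFunLike.congr_fun (P.hessInv_right x t) w
  rw [le_div_iff₀' P.m_pos]
  simpa [hw] using P.mul_norm_le_norm_hess_apply x t (P.hessInv x t w)

theorem C0_nonneg : 0 ≤ P.C0 := (norm_nonneg _).trans (P.dtgrad_bound 0 0)
theorem C1_nonneg : 0 ≤ P.C1 := (norm_nonneg (P.d3 0 0)).trans (P.d3_bound 0 0)
theorem C2_nonneg : 0 ≤ P.C2 := (norm_nonneg _).trans (P.dthess_bound 0 0)
theorem C3_nonneg : 0 ≤ P.C3 := (norm_nonneg _).trans (P.dttgrad_bound 0 0)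

theorem norm_grad_sub_grad_le (x : ℝⁿ) (s t : ℝ) :
    ‖P.grad x t - P.grad x s‖ ≤ P.C0 * ‖t - s‖ :=
  convex_univ.norm_image_sub_le_of_norm_hasDerivWithin_le
    (fun r _ => (P.dtgrad_spec x r).hasDerivWithinAt) (fun r _ => P.dtgrad_bound x r)
    (Set.mem_univ s) (Set.mem_univ t)

theorem norm_xstar_sub_xstar_le (s t : ℝ) :
    ‖P.xstar t - P.xstar s‖ ≤ P.C0 / P.m * ‖t - s‖ := by
  have hmono := mul_norm_sub_sq_le_inner_sub (fun y => P.hess_spec y t)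
    (fun y => P.strong_convex y t) (P.xstar t) (P.xstar s)
  have hgrad : P.grad (P.xstar t) t - P.grad (P.xstar s) t =
      P.grad (P.xstar s) s - P.grad (P.xstar s) t := by
    rw [P.xstar_grad t, P.xstar_grad s]
  rw [hgrad] at hmono
  rw [div_mul_eq_mul_div, le_div_iff₀' P.m_pos]
  exact (mul_norm_le_norm_of_mul_sq_le_inner hmono).trans
    ((P.norm_grad_sub_grad_le _ _ _).trans_eq (by rw [norm_sub_rev]))

def gradStep (γ t : ℝ) (y : ℝⁿ) : ℝⁿ := y - γ • P.grad y t

def predictStep (h t : ℝ) (y : ℝⁿ) : ℝⁿ := y - h • P.hessInv y t (P.dtgrad y t)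

theorem isFixedPt_gradStep (γ t : ℝ) : Function.IsFixedPt (P.gradStep γ t) (P.xstar t) := by
  simp [Function.IsFixedPt, gradStep, P.xstar_grad t]

theorem lipschitzWith_gradStep (γ t : ℝ) :
    LipschitzWith (max |1 - γ * P.m| |1 - γ * P.L|).toNNReal (P.gradStep γ t) :=
  LipschitzWith.of_dist_le' fun y z => by
    rw [dist_eq_norm, dist_eq_norm]
    exact convex_univ.norm_image_sub_le_of_norm_hasFDerivWithin_le
      (fun u _ => ((hasFDerivAt_id u).sub ((P.hess_spec u t).const_smul γ)).hasFDerivWithinAt)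
      (fun u _ => (P.isSymmetric_hess u t).norm_id_sub_smul_le (P.strong_convex u t)
        (P.inner_hess_self_le u t) γ) (Set.mem_univ z) (Set.mem_univ y)

theorem norm_iterate_gradStep_sub_xstar_le (γ t : ℝ) (τ : ℕ) (y : ℝⁿ) :
    ‖(P.gradStep γ t)^[τ] y - P.xstar t‖ ≤
      max |1 - γ * P.m| |1 - γ * P.L| ^ τ * ‖y - P.xstar t‖ := by
  have hρ : 0 ≤ max |1 - γ * P.m| |1 - γ * P.L| := (abs_nonneg _).trans (le_max_left _ _)
  simpa only [dist_eq_norm, NNReal.coe_pow, Real.coe_toNNReal _ hρ,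
    ((P.isFixedPt_gradStep γ t).iterate τ).eq] using
    ((P.lipschitzWith_gradStep γ t).iterate τ).dist_le_mul y (P.xstar t)

theorem norm_predictStep_sub_xstar_le {h : ℝ} (hh : 0 ≤ h) (t : ℝ) (y : ℝⁿ) :
    ‖P.predictStep h t y - P.xstar (t + h)‖ ≤ ‖y - P.xstar t‖ + h * (2 * P.C0 / P.m) := by
  have hpred : ‖h • P.hessInv y t (P.dtgrad y t)‖ ≤ h * (P.C0 / P.m) := by
    rw [norm_smul, Real.norm_of_nonneg hh]
    exact mul_le_mul_of_nonneg_left ((P.norm_hessInv_apply_le _ _ _).trans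
      (div_le_div_of_nonneg_right (P.dtgrad_bound y t) P.m_pos.le)) hh
  have hdrift : ‖P.xstar t - P.xstar (t + h)‖ ≤ P.C0 / P.m * h := by
    simpa [Real.norm_of_nonneg hh] using P.norm_xstar_sub_xstar_le (t + h) t
  calc ‖P.predictStep h t y - P.xstar (t + h)‖
      = ‖(y - P.xstar t) - h • P.hessInv y t (P.dtgrad y t) + (P.xstar t - P.xstar (t + h))‖ := by
        rw [predictStep]; congr 1; abel
    _ ≤ ‖y - P.xstar t‖ + ‖h • P.hessInv y t (P.dtgrad y t)‖ + ‖P.xstar t - P.xstar (t + h)‖ :=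
        (norm_add_le _ _).trans (by gcongr; exact norm_sub_le _ _)
    _ ≤ ‖y - P.xstar t‖ + h * (P.C0 / P.m) + P.C0 / P.m * h := by gcongr
    _ = ‖y - P.xstar t‖ + h * (2 * P.C0 / P.m) := by ring

end TVOpt

/-- **Theorem 1, part i.** GTT with stepsize `0 < γ < 2/L` (so that
`ρ := max{|1−γm|,|1−γL|} < 1`) converges exponentially up to a bounded error, for
any sampling period `h > 0`. -/
theorem gtt_convergence_any_period (n : ℕ) (hn : 0 < n) (P : TVOpt n) (h : ℝ) (hh : 0 < h)
    (γ : ℝ) (τ : ℕ) (hτ : 1 ≤ τ) (hγ0 : 0 < γ) (hγL : γ < 2 / P.L)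
    (ρ : ℝ) (hρ : ρ = max |1 - γ * P.m| |1 - γ * P.L|)
    (x : ℕ → EuclideanSpace ℝ (Fin n))
    (hrec : ∀ k : ℕ, x (k + 1) =
      (fun y => y - γ • P.grad y (((k : ℝ) + 1) * h))^[τ]
        (x k - h • P.hessInv (x k) ((k : ℝ) * h) (P.dtgrad (x k) ((k : ℝ) * h)))) :
    ρ < 1 ∧ ∀ k : ℕ,
      ‖x k - P.xstar ((k : ℝ) * h)‖ ≤
        ρ ^ (τ * k) * ‖x 0 - P.xstar 0‖ +
        ρ ^ τ * (h * (2 * P.C0 / P.m) +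
            h ^ 2 / 2 * (P.C0 ^ 2 * P.C1 / P.m ^ 3 + 2 * P.C0 * P.C2 / P.m ^ 2 + P.C3 / P.m)) *
          ((1 - ρ ^ (τ * k)) / (1 - ρ ^ τ)) := by
  have hρ1 : ρ < 1 := hρ ▸ max_abs_one_sub_mul_lt_one P.m_pos (P.m_le_L hn) hγ0 hγL
  have hρ0 : 0 ≤ ρ := hρ ▸ (abs_nonneg _).trans (le_max_left _ _)
  have hsecond : 0 ≤ h ^ 2 / 2 *
      (P.C0 ^ 2 * P.C1 / P.m ^ 3 + 2 * P.C0 * P.C2 / P.m ^ 2 + P.C3 / P.m) := by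
    have := P.m_pos
    have := P.C0_nonneg
    have := P.C1_nonneg
    have := P.C2_nonneg
    have := P.C3_nonneg
    positivity
  have hstep : ∀ k : ℕ, ‖x (k + 1) - P.xstar ((k + 1 : ℕ) * h)‖ ≤
      ρ ^ τ * (‖x k - P.xstar (k * h)‖ + (h * (2 * P.C0 / P.m) + h ^ 2 / 2 *
        (P.C0 ^ 2 * P.C1 / P.m ^ 3 + 2 * P.C0 * P.C2 / P.m ^ 2 + P.C3 / P.m))) := fun k => by
    rw [hrec k, Nat.cast_succ, add_one_mul, hρ]
    refine (P.norm_iterate_gradStep_sub_xstar_le γ _ τ _).trans ?_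
    gcongr
    exact (P.norm_predictStep_sub_xstar_le hh.le _ _).trans (by linarith)
  refine ⟨hρ1, fun k => ?_⟩
  simpa only [pow_mul, Nat.cast_zero, zero_mul] using
    le_geom_of_le_mul_add (e := fun k => ‖x k - P.xstar (k * h)‖) (pow_nonneg hρ0 τ)
    (pow_lt_one₀ hρ0 hρ1 (by omega)).ne hstep k
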